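/- arXiv:2507.21550 — 3 statements merged into one kernel-verified Lean document; each statement's English description precedes it below -/
import Mathlib

section
/- Let N ≥ 1 and let S, P : Fin N → Fin N satisfy S(0) ≠ 0 and P(0) = 0. Then there exists x such that P(S(x)) ≠ x, or there exists x ≠ 0 such that S(P(x)) ≠ x. (Totality of EndOfLine.) -/
theorem end_of_line_total (N : ℕ) (hN : 1 ≤ N) (S P : Fin N → Fin N)
    (hS : S ⟨0, hN⟩ ≠ ⟨0, hN⟩) (hP : P ⟨0, hN⟩ = ⟨0, hN⟩) :
    (∃ x, P (S x) ≠ x) ∨ (∃ x, x ≠ ⟨0, hN⟩ ∧ S (P x) ≠ x) := by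
  by_contra h
  push_neg at h
  obtain ⟨h1, _⟩ := h
  have hinj : Function.Injective S := fun a b hab => by
    have := h1 a; rw [hab, h1 b] at this; exact this.symm
  have hsurj : Function.Surjective S := Finite.surjective_of_injective hinj
  obtain ⟨x, hx⟩ := hsurj ⟨0, hN⟩
  have : x = ⟨0, hN⟩ := by rw [← h1 x, hx, hP]
  rw [this] at hx
  exact hS hx
end

section
/- Let N ≥ 1 and let S, P : Fin N → Fin N satisfy S(0) ≠ 0 and P(0) = 0. Then there exists x such that P(S(x)) ≠ x. (Totality of SinkOfLine.) -/
theorem sink_of_line_total (N : ℕ) (hN : 1 ≤ N) (S P : Fin N → Fin N)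
    (hS : S ⟨0, hN⟩ ≠ ⟨0, hN⟩) (hP : P ⟨0, hN⟩ = ⟨0, hN⟩) :
    ∃ x, P (S x) ≠ x := by
  by_contra h
  push_neg at h
  have hinj : Function.Injective S := Function.LeftInverse.injective h
  have hsurj : Function.Surjective S := Finite.surjective_of_injective hinj
  obtain ⟨x, hx⟩ := hsurj ⟨0, hN⟩
  have : x = ⟨0, hN⟩ := by rw [← h x, hx, hP]
  exact hS (this ▸ hx)
end

section
/- Let S : Fin N → Fin N with S(0) > 0, and define S' : Fin N → Fin N by S'(x) = x if S(x) < x and S'(x) = S(x) otherwise. If y satisfies S'(y) > y and S'(S'(y)) ≤ S'(y), then y satisfies S(y) > y and S(S(y)) ≤ S(y). (Correctness of the reduction from Iter to Iter2.) -/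
theorem iter_to_iter2_correct (N : ℕ) (hN : 1 ≤ N) (S S' : Fin N → Fin N)
    (hS : S ⟨0, hN⟩ > ⟨0, hN⟩)
    (hS' : ∀ x, S' x = if S x < x then x else S x)
    (y : Fin N) (hy1 : S' y > y) (hy2 : S' (S' y) ≤ S' y) :
    S y > y ∧ S (S y) ≤ S y := by
  have h1 : S' y = S y := by
    rw [hS'] at hy1 ⊢
    split at hy1 <;> simp_all
  rw [h1] at hy1 hy2
  refine ⟨hy1, ?_⟩
  rw [hS'] at hy2
  split at hy2 <;> omega
end
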